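/- arXiv:2510.25854 — 2 statements merged into one kernel-verified Lean document; each statement's English description precedes it below -/
import Mathlib

section
/- Let n ≥ 3 and let U₁, …, Uₙ be single-qubit unitaries, each belonging to the one-qubit Clifford group 𝒞₁. If the n-qubit unitary U₁⊗U₂⊗⋯⊗Uₙ maps every GHZ-basis state to a unit-scalar multiple of a GHZ-basis state, then for each i there exist kᵢ ∈ {0,1}, a single-qubit Pauli matrix Qᵢ ∈ {I,X,Y,Z}, and a unit complex scalar λᵢ such that Uᵢ = λᵢ Qᵢ S^{kᵢ}. In words: up to phase and Pauli factors, the only single-qubit gate that can appear in a GHZ-preserving tensor product of single-qubit gates is the phase gate S. -/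
noncomputable section

/-- The state space of a register of qubits indexed by `ι`: `(ℂ²)^{⊗ι}`. -/
abbrev QState (ι : Type) : Type := (ι → Fin 2) → ℂ

/-- Operators (matrices) on the state space of qubits indexed by `ι`. -/
abbrev QOp (ι : Type) : Type := Matrix (ι → Fin 2) (ι → Fin 2) ℂ

def pI : Matrix (Fin 2) (Fin 2) ℂ := 1

def pX : Matrix (Fin 2) (Fin 2) ℂ := !![0, 1; 1, 0]

def pY : Matrix (Fin 2) (Fin 2) ℂ := !![0, -Complex.I; Complex.I, 0]

def pZ : Matrix (Fin 2) (Fin 2) ℂ := !![1, 0; 0, -1]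

/-- The single-qubit phase gate `S = diag(1, i)`. -/
def sGate : Matrix (Fin 2) (Fin 2) ℂ := !![1, 0; 0, Complex.I]

def pauliSet : Set (Matrix (Fin 2) (Fin 2) ℂ) := {pI, pX, pY, pZ}

/-- The `n`-qubit GHZ state `(|0…0⟩ + |1…1⟩)/√2`. -/
def ghz (n : ℕ) : QState (Fin n) := fun f =>
  (Real.sqrt 2 : ℂ)⁻¹ *
    ((if f = (fun _ => (0 : Fin 2)) then 1 else 0) +
     (if f = (fun _ => (1 : Fin 2)) then 1 else 0))

/-- A single-qubit operator embedded at position `k` (identity elsewhere). -/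
def embed1 {ι : Type} [Fintype ι] [DecidableEq ι] (k : ι)
    (A : Matrix (Fin 2) (Fin 2) ℂ) : QOp ι := fun f g =>
  A (f k) (g k) * ∏ i ∈ Finset.univ.erase k, (if f i = g i then (1 : ℂ) else 0)

/-- Kronecker product of a family of single-qubit operators. -/
def kron {ι : Type} [Fintype ι] (P : ι → Matrix (Fin 2) (Fin 2) ℂ) : QOp ι :=
  fun f g => ∏ i, P i (f i) (g i)

/-- `M` is a Pauli string: a Kronecker product of Pauli matrices. -/
def IsPauliString {ι : Type} [Fintype ι] (M : QOp ι) : Prop :=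
  ∃ P : ι → Matrix (Fin 2) (Fin 2) ℂ, (∀ i, P i ∈ pauliSet) ∧ M = kron P

/-- `v` is a GHZ-basis state: the image of the GHZ state under a Pauli string. -/
def IsGHZBasis {n : ℕ} (v : QState (Fin n)) : Prop :=
  ∃ M : QOp (Fin n), IsPauliString M ∧ v = M.mulVec (ghz n)

/-- Inner product. -/
def qinner {ι : Type} [Fintype ι] [DecidableEq ι] (u v : QState ι) : ℂ :=
  ∑ f, star (u f) * v f

/-- Tensor product of two states of an `n`-qubit register, giving a state of the
`2n`-qubit system (copy 1 indexed by `Sum.inl`, copy 2 by `Sum.inr`). -/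
def tensor2 {n : ℕ} (u v : QState (Fin n)) : QState (Fin n ⊕ Fin n) :=
  fun f => u (fun i => f (Sum.inl i)) * v (fun i => f (Sum.inr i))

/-- A `2n`-qubit operator is GHZ-preserving if it maps any tensor product of two
GHZ-basis states to a unit scalar multiple of a tensor product of GHZ-basis states. -/
def GHZPreserving2 {n : ℕ} (U : QOp (Fin n ⊕ Fin n)) : Prop :=
  ∀ u v : QState (Fin n), IsGHZBasis u → IsGHZBasis v →
    ∃ u' v' : QState (Fin n), IsGHZBasis u' ∧ IsGHZBasis v' ∧
      ∃ lam : ℂ, ‖lam‖ = 1 ∧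
        U.mulVec (tensor2 u v) = lam • tensor2 u' v'

/-- Controlled-Z gate between qubits `p` and `q` (identity elsewhere). -/
def czMat {ι : Type} [Fintype ι] [DecidableEq ι] (p q : ι) : QOp ι :=
  Matrix.diagonal fun f => if f p = 1 ∧ f q = 1 then (-1 : ℂ) else 1

/-- Phase gate `S` on qubit `p` (identity elsewhere). -/
def sMat {ι : Type} [Fintype ι] [DecidableEq ι] (p : ι) : QOp ι :=
  Matrix.diagonal fun f => if f p = 1 then Complex.I else 1

/-- B-generator `CZ_{i,n+i} · CZ_{j,n+j}` on the two-copy system. -/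
def bCZ {n : ℕ} (i j : Fin n) : QOp (Fin n ⊕ Fin n) :=
  czMat (Sum.inl i : Fin n ⊕ Fin n) (Sum.inr i) *
    czMat (Sum.inl j : Fin n ⊕ Fin n) (Sum.inr j)

/-- B-generator `S_i · S_j` (phase gates on copy 1). -/
def bS₁ {n : ℕ} (i j : Fin n) : QOp (Fin n ⊕ Fin n) :=
  sMat (Sum.inl i : Fin n ⊕ Fin n) * sMat (Sum.inl j : Fin n ⊕ Fin n)

/-- B-generator `S_{n+i} · S_{n+j}` (phase gates on copy 2). -/
def bS₂ {n : ℕ} (i j : Fin n) : QOp (Fin n ⊕ Fin n) :=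
  sMat (Sum.inr i : Fin n ⊕ Fin n) * sMat (Sum.inr j : Fin n ⊕ Fin n)

/-- H-generator `C₁ = ∏_{i=1}^n CNOT_{i → n+i}` (controls on copy 1, targets on copy 2). -/
def hC₁ (n : ℕ) : QOp (Fin n ⊕ Fin n) := fun f g =>
  if f = Sum.elim (fun i => g (Sum.inl i)) (fun i => g (Sum.inr i) + g (Sum.inl i))
  then 1 else 0

/-- H-generator `C₂ = ∏_{i=1}^n CNOT_{n+i → i}` (controls on copy 2, targets on copy 1). -/
def hC₂ (n : ℕ) : QOp (Fin n ⊕ Fin n) := fun f g =>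
  if f = Sum.elim (fun i => g (Sum.inl i) + g (Sum.inr i)) (fun i => g (Sum.inr i))
  then 1 else 0


/-- The single-qubit Pauli group: matrices `λP` with `λ ∈ {1,-1,i,-i}`, `P` Pauli. -/
def Pauli1Set : Set (Matrix (Fin 2) (Fin 2) ℂ) :=
  {M | ∃ lam : ℂ, lam ∈ ({1, -1, Complex.I, -Complex.I} : Set ℂ) ∧
    ∃ P ∈ pauliSet, M = lam • P}

/-- Membership in the one-qubit Clifford group `𝒞₁`: a unitary whose conjugation
action maps the Pauli group onto itself. -/
def IsClifford1 (A : Matrix (Fin 2) (Fin 2) ℂ) : Prop :=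
  A ∈ Matrix.unitaryGroup (Fin 2) ℂ ∧ (fun M => A * M * A⁻¹) '' Pauli1Set = Pauli1Set

/-!
`Z_i Z_j` stabilises `|GHZ⟩`, so `P := ⊗ₘ U_m V_m U_m⁻¹` (with `V_m = Z` for `m ∈ {i, j}`,
`V_m = 1` otherwise) stabilises the GHZ-basis state `(⊗ U)|GHZ⟩`. As every `U_m` is Clifford,
each factor of `P` is a Pauli up to phase, so `P` maps `|f⟩` to a multiple of `|f + β⟩` for a
fixed flip pattern `β`. A GHZ-basis state is supported on two complementary bit strings, so
`β` is all-zero or all-one; since `P_k = 1` for a third qubit `k`, it is zero, whence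
`U_i Z U_i⁻¹ = ±Z` and `U_i` is diagonal or antidiagonal. Finally the Clifford condition on
`U_i X U_i⁻¹` makes the ratio of the two nonzero entries of `U_i` a fourth root of unity.
-/

open Matrix Finset

lemma fin_two_add_add_cancel {ι : Type} (f b : ι → Fin 2) : f + b + b = f := by
  funext m
  have h : ∀ x y : Fin 2, x + y + y = x := by decide
  exact h (f m) (b m)

lemma fin_two_add_eq_iff {ι : Type} {f g b : ι → Fin 2} : f + b = g ↔ f = g + b := by
  constructor <;> rintro rfl <;> simp [fin_two_add_add_cancel]

/-- A generalized permutation matrix sending `|c⟩` to a nonzero multiple of `|c + b⟩`. -/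
def IsShift (b : Fin 2) (A : Matrix (Fin 2) (Fin 2) ℂ) : Prop :=
  ∀ x c, A x c ≠ 0 ↔ x = c + b

lemma IsShift.unique {b b' : Fin 2} {A : Matrix (Fin 2) (Fin 2) ℂ} (h : IsShift b A)
    (h' : IsShift b' A) : b = b' := by
  simpa using (h' (0 + b) 0).1 ((h _ 0).2 rfl)

lemma isShift_smul_iff {b : Fin 2} {A : Matrix (Fin 2) (Fin 2) ℂ} {c : ℂ} (hc : c ≠ 0) :
    IsShift b (c • A) ↔ IsShift b A := by
  simp [IsShift, hc]

lemma isShift_one : IsShift 0 1 := by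
  intro x c
  simp [Matrix.one_apply, eq_comm]

lemma isShift_pZ : IsShift 0 pZ := fun x c => by
  fin_cases x <;> fin_cases c <;> simp [pZ]

lemma exists_isShift_of_mem_pauliSet {Q : Matrix (Fin 2) (Fin 2) ℂ} (hQ : Q ∈ pauliSet) :
    ∃ b, IsShift b Q := by
  rcases hQ with rfl | rfl | rfl | rfl
  · exact ⟨0, isShift_one⟩
  · exact ⟨1, fun x c => by fin_cases x <;> fin_cases c <;> simp [pX]⟩
  · exact ⟨1, fun x c => by fin_cases x <;> fin_cases c <;> simp [pY]⟩
  · exact ⟨0, isShift_pZ⟩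

lemma exists_isShift_of_mem_pauli1Set {M : Matrix (Fin 2) (Fin 2) ℂ} (hM : M ∈ Pauli1Set) :
    ∃ b, IsShift b M := by
  obtain ⟨lam, hlam, P, hP, rfl⟩ := hM
  have hlam0 : lam ≠ 0 := by rcases hlam with rfl | rfl | rfl | rfl <;> simp
  obtain ⟨b, hb⟩ := exists_isShift_of_mem_pauliSet hP
  exact ⟨b, (isShift_smul_iff hlam0).2 hb⟩

section Kron

variable {ι : Type} [Fintype ι] {A : ι → Matrix (Fin 2) (Fin 2) ℂ} {b : ι → Fin 2}

lemma kron_apply_ne_zero_iff (hA : ∀ i, IsShift (b i) (A i)) (f g : ι → Fin 2) :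
    kron A f g ≠ 0 ↔ f = g + b := by
  simp only [kron, ne_eq, prod_eq_zero_iff, mem_univ, true_and, not_exists, funext_iff]
  exact forall_congr' fun i => hA i (f i) (g i)

variable [DecidableEq ι]

lemma kron_mul (A B : ι → Matrix (Fin 2) (Fin 2) ℂ) :
    kron A * kron B = kron (fun i => A i * B i) := by
  ext f g
  calc ∑ h : ι → Fin 2, (∏ i, A i (f i) (h i)) * ∏ i, B i (h i) (g i)
      = ∑ h ∈ Fintype.piFinset fun _ => univ, ∏ i, A i (f i) (h i) * B i (h i) (g i) := by
        simp only [Fintype.piFinset_univ, prod_mul_distrib]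
    _ = ∏ i, ∑ j, A i (f i) j * B i j (g i) := by rw [prod_univ_sum]
    _ = ∏ i, (A i * B i) (f i) (g i) := by simp only [Matrix.mul_apply]

lemma kron_mulVec_apply (hA : ∀ i, IsShift (b i) (A i)) (v : QState ι) (f : ι → Fin 2) :
    (kron A *ᵥ v) f = kron A f (f + b) * v (f + b) := by
  refine sum_eq_single (f + b) (fun g _ hg => mul_eq_zero_of_left ?_ _) (by simp)
  exact not_ne_iff.mp fun h =>
    hg (fin_two_add_eq_iff.2 ((kron_apply_ne_zero_iff hA f g).1 h)).symm

lemma kron_conj_mulVec_eq_self {U V : ι → Matrix (Fin 2) (Fin 2) ℂ}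
    (hU : ∀ m, (U m)⁻¹ * U m = 1) {w v : QState ι} (hV : kron V *ᵥ w = w) {lam : ℂ}
    (hlam : lam ≠ 0) (hw : kron U *ᵥ w = lam • v) :
    kron (fun m => U m * V m * (U m)⁻¹) *ᵥ v = v := by
  have hcomm : kron (fun m => U m * V m * (U m)⁻¹) * kron U = kron U * kron V := by
    simp only [kron_mul, Matrix.mul_assoc, hU, Matrix.mul_one]
  apply smul_right_injective _ hlam
  calc lam • (kron (fun m => U m * V m * (U m)⁻¹) *ᵥ v)
      = (kron (fun m => U m * V m * (U m)⁻¹) * kron U) *ᵥ w := by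
        rw [← mulVec_mulVec, hw, mulVec_smul]
    _ = lam • v := by rw [hcomm, ← mulVec_mulVec, hV, hw]

end Kron

section GHZ

variable {n : ℕ}

lemma ghz_ne_zero_iff (f : Fin n → Fin 2) : ghz n f ≠ 0 ↔ f = 0 ∨ f = 1 := by
  have h2 : (Real.sqrt 2 : ℂ)⁻¹ ≠ 0 := by norm_num
  simp only [ghz, ne_eq, mul_eq_zero, h2, false_or, ← Pi.zero_def, ← Pi.one_def]
  split_ifs <;> simp_all

lemma kron_pI_mulVec (v : QState (Fin n)) : kron (fun _ => pI) *ᵥ v = v := by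
  ext f
  rw [kron_mulVec_apply (A := fun _ => pI) (b := 0) fun _ => isShift_one]
  simp [kron, pI, Matrix.one_apply]

lemma isGHZBasis_ghz : IsGHZBasis (ghz n) :=
  ⟨_, ⟨fun _ => pI, fun _ => by simp [pauliSet], rfl⟩, (kron_pI_mulVec _).symm⟩

lemma IsGHZBasis.exists_ne_zero_iff {v : QState (Fin n)} (hv : IsGHZBasis v) :
    ∃ a, ∀ f, v f ≠ 0 ↔ f = a ∨ f = a + 1 := by
  obtain ⟨_, ⟨P, hP, rfl⟩, rfl⟩ := hv
  choose a ha using fun m => exists_isShift_of_mem_pauliSet (hP m)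
  refine ⟨a, fun f => ?_⟩
  rw [kron_mulVec_apply ha, mul_ne_zero_iff, ghz_ne_zero_iff, kron_apply_ne_zero_iff ha,
    fin_two_add_add_cancel, fin_two_add_eq_iff, fin_two_add_eq_iff, zero_add, add_comm 1 a]
  exact ⟨And.right, And.intro rfl⟩

lemma eq_zero_or_one_of_kron_mulVec_eq_self {P : Fin n → Matrix (Fin 2) (Fin 2) ℂ}
    {b : Fin n → Fin 2} (hP : ∀ m, IsShift (b m) (P m)) {v : QState (Fin n)}
    (hv : IsGHZBasis v) (hfix : kron P *ᵥ v = v) : b = 0 ∨ b = 1 := by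
  obtain ⟨a, ha⟩ := hv.exists_ne_zero_iff
  have hva : v a ≠ 0 := (ha a).2 (Or.inl rfl)
  rw [← hfix, kron_mulVec_apply hP] at hva
  simpa using (ha (a + b)).1 (right_ne_zero_of_mul hva)

lemma kron_mulVec_ghz_of_isShift_zero {D : Fin n → Matrix (Fin 2) (Fin 2) ℂ}
    (hD : ∀ m, IsShift 0 (D m)) (h0 : ∏ m, D m 0 0 = 1) (h1 : ∏ m, D m 1 1 = 1) :
    kron D *ᵥ ghz n = ghz n := by
  ext f
  rw [kron_mulVec_apply (b := 0) hD, add_zero]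
  by_cases hf : ghz n f = 0
  · rw [hf, mul_zero]
  · rcases (ghz_ne_zero_iff f).1 hf with rfl | rfl
    · simp [kron, h0]
    · simp [kron, h1]

lemma kron_pZ_pair_mulVec_ghz {i j : Fin n} (hij : i ≠ j) :
    kron (fun m => if m ∈ ({i, j} : Finset (Fin n)) then pZ else 1) *ᵥ ghz n = ghz n := by
  refine kron_mulVec_ghz_of_isShift_zero (fun m => ?_) ?_ ?_
  · split_ifs
    exacts [isShift_pZ, isShift_one]
  all_goals
    rw [prod_congr rfl fun m _ => apply_ite (fun M : Matrix (Fin 2) (Fin 2) ℂ => M _ _) _ _ _]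
    simp only [one_apply_eq, prod_ite_mem, univ_inter, prod_const, card_pair hij]
    simp [pZ]

end GHZ

section SingleQubit

open Complex

def phase4 : Set ℂ := {1, -1, I, -I}

def IsPauliSPowUpToPhase (A : Matrix (Fin 2) (Fin 2) ℂ) : Prop :=
  ∃ k : Fin 2, ∃ Q ∈ pauliSet, ∃ lam : ℂ, ‖lam‖ = 1 ∧ A = lam • (Q * sGate ^ (k : ℕ))

lemma IsPauliSPowUpToPhase.smul {A : Matrix (Fin 2) (Fin 2) ℂ} (hA : IsPauliSPowUpToPhase A)
    {c : ℂ} (hc : ‖c‖ = 1) : IsPauliSPowUpToPhase (c • A) := by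
  obtain ⟨k, Q, hQ, lam, hlam, rfl⟩ := hA
  exact ⟨k, Q, hQ, c * lam, by rw [norm_mul, hc, hlam, one_mul], smul_smul c lam _⟩

lemma isPauliSPowUpToPhase_diag {w : ℂ} (hw : w ∈ phase4) :
    IsPauliSPowUpToPhase !![w, 0; 0, 1] := by
  rcases hw with rfl | rfl | rfl | rfl <;>
    [refine ⟨0, pI, by simp [pauliSet], 1, by simp, ?_⟩;
     refine ⟨0, pZ, by simp [pauliSet], -1, by simp, ?_⟩;
     refine ⟨1, pZ, by simp [pauliSet], I, by simp, ?_⟩;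
     refine ⟨1, pI, by simp [pauliSet], -I, by simp, ?_⟩] <;>
    ext x y <;> fin_cases x <;> fin_cases y <;> simp [pI, pZ, sGate]

lemma isPauliSPowUpToPhase_antidiag {w : ℂ} (hw : w ∈ phase4) :
    IsPauliSPowUpToPhase !![0, w; 1, 0] := by
  rcases hw with rfl | rfl | rfl | rfl <;>
    [refine ⟨0, pX, by simp [pauliSet], 1, by simp, ?_⟩;
     refine ⟨0, pY, by simp [pauliSet], -I, by simp, ?_⟩;
     refine ⟨1, pX, by simp [pauliSet], 1, by simp, ?_⟩;
     refine ⟨1, pY, by simp [pauliSet], -I, by simp, ?_⟩] <;>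
    ext x y <;> fin_cases x <;> fin_cases y <;> simp [pX, pY, sGate]

lemma pauli1Set_apply_eq_zero_or_mem {M : Matrix (Fin 2) (Fin 2) ℂ} (hM : M ∈ Pauli1Set)
    (x y : Fin 2) : M x y = 0 ∨ M x y ∈ phase4 := by
  obtain ⟨lam, hlam, P, hP, rfl⟩ := hM
  rcases hlam with rfl | rfl | rfl | rfl <;> rcases hP with rfl | rfl | rfl | rfl <;>
    fin_cases x <;> fin_cases y <;> simp [phase4, pI, pX, pY, pZ]

lemma mem_pauli1Set_of_mem_pauliSet {Q : Matrix (Fin 2) (Fin 2) ℂ} (hQ : Q ∈ pauliSet) :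
    Q ∈ Pauli1Set :=
  ⟨1, Set.mem_insert _ _, Q, hQ, (one_smul _ _).symm⟩

lemma one_mem_pauli1Set : (1 : Matrix (Fin 2) (Fin 2) ℂ) ∈ Pauli1Set :=
  mem_pauli1Set_of_mem_pauliSet (by simp [pauliSet, pI])

lemma pX_mem_pauli1Set : pX ∈ Pauli1Set :=
  mem_pauli1Set_of_mem_pauliSet (by simp [pauliSet])

lemma pZ_mem_pauli1Set : pZ ∈ Pauli1Set :=
  mem_pauli1Set_of_mem_pauliSet (by simp [pauliSet])

lemma exists_mem_phase4_eq_mul {M : Matrix (Fin 2) (Fin 2) ℂ} (hM : M ∈ Pauli1Set) {x y : ℂ}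
    (hM01 : M 0 1 = x * star y) (hx : star x * x = 1) (hy : star y * y = 1) :
    ∃ w ∈ phase4, x = w * y := by
  refine ⟨x * star y, ?_, by rw [mul_assoc, hy, mul_one]⟩
  have hne : x * star y ≠ 0 :=
    mul_ne_zero (right_ne_zero_of_mul_eq_one hx) (left_ne_zero_of_mul_eq_one hy)
  exact hM01 ▸ (pauli1Set_apply_eq_zero_or_mem hM 0 1).resolve_left (hM01 ▸ hne)

namespace IsClifford1

variable {A : Matrix (Fin 2) (Fin 2) ℂ}

lemma star_mul_self (hA : IsClifford1 A) : star A * A = 1 :=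
  Unitary.star_mul_self_of_mem hA.1

lemma inv_eq_star (hA : IsClifford1 A) : A⁻¹ = star A :=
  inv_eq_left_inv hA.star_mul_self

lemma inv_mul_self (hA : IsClifford1 A) : A⁻¹ * A = 1 :=
  hA.inv_eq_star ▸ hA.star_mul_self

lemma conj_mem (hA : IsClifford1 A) {M : Matrix (Fin 2) (Fin 2) ℂ} (hM : M ∈ Pauli1Set) :
    A * M * A⁻¹ ∈ Pauli1Set :=
  hA.2 ▸ ⟨M, hM, rfl⟩

lemma isPauliSPowUpToPhase_of_diag {a d : ℂ} (hA : IsClifford1 !![a, 0; 0, d]) :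
    IsPauliSPowUpToPhase !![a, 0; 0, d] := by
  have hu := hA.star_mul_self
  have ha : star a * a = 1 := by
    simpa [Matrix.mul_apply, Fin.sum_univ_two] using congrFun (congrFun hu 0) 0
  have hd : star d * d = 1 := by
    simpa [Matrix.mul_apply, Fin.sum_univ_two] using congrFun (congrFun hu 1) 1
  obtain ⟨w, hw, rfl⟩ := exists_mem_phase4_eq_mul (hA.conj_mem pX_mem_pauli1Set)
    (by simp [hA.inv_eq_star, pX, vecMul, dotProduct, Fin.sum_univ_two]) ha hd
  have hsmul : !![w * d, 0; 0, d] = d • !![w, 0; 0, 1] := by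
    ext x y; fin_cases x <;> fin_cases y <;> simp [mul_comm]
  rw [hsmul]
  exact (isPauliSPowUpToPhase_diag hw).smul
    (CStarRing.norm_of_mem_unitary (Unitary.mem_iff_star_mul_self.2 hd))

lemma isPauliSPowUpToPhase_of_antidiag {b c : ℂ} (hA : IsClifford1 !![0, b; c, 0]) :
    IsPauliSPowUpToPhase !![0, b; c, 0] := by
  have hu := hA.star_mul_self
  have hb : star b * b = 1 := by
    simpa [Matrix.mul_apply, Fin.sum_univ_two] using congrFun (congrFun hu 1) 1
  have hc : star c * c = 1 := by
    simpa [Matrix.mul_apply, Fin.sum_univ_two] using congrFun (congrFun hu 0) 0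
  obtain ⟨w, hw, rfl⟩ := exists_mem_phase4_eq_mul (hA.conj_mem pX_mem_pauli1Set)
    (by simp [hA.inv_eq_star, pX, vecMul, dotProduct, Fin.sum_univ_two]) hb hc
  have hsmul : !![0, w * c; c, 0] = c • !![0, w; 1, 0] := by
    ext x y; fin_cases x <;> fin_cases y <;> simp [mul_comm]
  rw [hsmul]
  exact (isPauliSPowUpToPhase_antidiag hw).smul
    (CStarRing.norm_of_mem_unitary (Unitary.mem_iff_star_mul_self.2 hc))

lemma eq_pZ_of_isShift_zero (hA : IsClifford1 A) {μ : ℂ} {R : Matrix (Fin 2) (Fin 2) ℂ}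
    (hR : R ∈ pauliSet) (h : A * pZ * A⁻¹ = μ • R) (h0 : IsShift 0 (A * pZ * A⁻¹)) :
    R = pZ := by
  have hμ : μ ≠ 0 := by
    rintro rfl
    rw [h, zero_smul] at h0
    exact (h0 0 0).2 rfl rfl
  rw [h, isShift_smul_iff hμ] at h0
  rcases hR with rfl | rfl | rfl | rfl
  · have htr := congrArg Matrix.trace h
    rw [Matrix.trace_mul_cycle, hA.inv_mul_self, Matrix.one_mul] at htr
    exact absurd (by simpa [pZ, pI, Matrix.trace_fin_two] using htr) hμ
  · exact absurd ((h0 1 0).1 (by simp [pX])) (by decide)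
  · exact absurd ((h0 1 0).1 (by simp [pY])) (by decide)
  · rfl

lemma isPauliSPowUpToPhase_of_conj_pZ (hA : IsClifford1 A) {μ : ℂ}
    (h : A * pZ * A⁻¹ = μ • pZ) : IsPauliSPowUpToPhase A := by
  have hAZ : A * pZ = μ • (pZ * A) := by
    rw [← Matrix.smul_mul, ← h, Matrix.mul_assoc, hA.inv_mul_self, Matrix.mul_one]
  obtain ⟨a, b, c, d, rfl⟩ : ∃ a b c d, A = !![a, b; c, d] := ⟨_, _, _, _, eta_fin_two A⟩
  have hcol : star a * a + star c * c = 1 := by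
    simpa [Matrix.mul_apply, Fin.sum_univ_two] using congrFun (congrFun hA.star_mul_self 0) 0
  simp only [pZ, Matrix.mul_fin_two, Matrix.smul_of, Matrix.smul_cons, smul_eq_mul,
    Matrix.smul_empty, EmbeddingLike.apply_eq_iff_eq, Matrix.vecCons_inj] at hAZ
  obtain ⟨⟨ha, hb, -⟩, ⟨hc, hd, -⟩, -⟩ := hAZ
  by_cases ha0 : a = 0
  · have hc0 : c ≠ 0 := by
      rintro rfl
      simp [ha0] at hcol
    have hμ : μ = -1 :=
      eq_neg_of_add_eq_zero_left ((mul_eq_zero.1 (by linear_combination hc)).resolve_right hc0)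
    have hd0 : d = 0 := by linear_combination (d * hμ - hd) / 2
    subst ha0 hd0
    exact hA.isPauliSPowUpToPhase_of_antidiag
  · have hμ : μ = 1 :=
      sub_eq_zero.1 ((mul_eq_zero.1 (by linear_combination -ha)).resolve_right ha0)
    have hb0 : b = 0 := by linear_combination (-b * hμ - hb) / 2
    have hc0 : c = 0 := by linear_combination (hc - c * hμ) / 2
    subst hb0 hc0
    exact hA.isPauliSPowUpToPhase_of_diag

end IsClifford1

end SingleQubit

/-- STATEMENT 2: if a tensor product of one-qubit Clifford gates maps every GHZ-basis
state to a unit multiple of a GHZ-basis state, then each factor is, up to a unit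
phase and a Pauli factor, a power of the phase gate `S`. -/
theorem stmt2 (n : ℕ) (hn : 3 ≤ n) (U : Fin n → Matrix (Fin 2) (Fin 2) ℂ)
    (hC : ∀ i, IsClifford1 (U i))
    (hpres : ∀ u : QState (Fin n), IsGHZBasis u →
      ∃ u' : QState (Fin n), IsGHZBasis u' ∧ ∃ lam : ℂ, ‖lam‖ = 1 ∧
        (kron U).mulVec u = lam • u') :
    ∀ i, ∃ k : Fin 2, ∃ Q ∈ pauliSet, ∃ lam : ℂ,
      ‖lam‖ = 1 ∧ U i = lam • (Q * sGate ^ (k : ℕ)) := by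
  intro i
  obtain ⟨j, hj, k, hk, hjk⟩ := (Finset.one_lt_card (s := univ.erase i)).1 (by
    rw [card_erase_of_mem (mem_univ i), card_univ, Fintype.card_fin]; omega)
  rw [mem_erase] at hj hk
  set V : Fin n → Matrix (Fin 2) (Fin 2) ℂ :=
    fun m => if m ∈ ({i, j} : Finset (Fin n)) then pZ else 1
  obtain ⟨v, hv, lam, hlam, hUv⟩ := hpres _ isGHZBasis_ghz
  have hfix := kron_conj_mulVec_eq_self (V := V) (fun m => (hC m).inv_mul_self)
    (kron_pZ_pair_mulVec_ghz hj.1.symm) (by rintro rfl; simp at hlam) hUv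
  have hmem : ∀ m, U m * V m * (U m)⁻¹ ∈ Pauli1Set := fun m => (hC m).conj_mem <| by
    dsimp only [V]
    split_ifs
    exacts [pZ_mem_pauli1Set, one_mem_pauli1Set]
  choose β hβ using fun m => exists_isShift_of_mem_pauli1Set (hmem m)
  have hβk : β k = 0 := (hβ k).unique <| by
    simp only [V, mem_insert, mem_singleton, hk.1, hjk.symm, or_self, if_false, Matrix.mul_one,
      mul_eq_one_comm.1 (hC k).inv_mul_self]
    exact isShift_one
  have hβ0 : β = 0 := (eq_zero_or_one_of_kron_mulVec_eq_self hβ hv hfix).resolve_right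
    fun h => by simp [h] at hβk
  obtain ⟨μ, -, R, hR, hconj⟩ := (hC i).conj_mem pZ_mem_pauli1Set
  have hRZ : R = pZ := (hC i).eq_pZ_of_isShift_zero hR hconj <| by
    simpa [V, hβ0] using hβ i
  exact (hC i).isPauliSPowUpToPhase_of_conj_pZ (hRZ ▸ hconj)
end
end

section
/- Let n ≥ 2 and let i ≠ j be two nodes with 1 ≤ i, j ≤ n. Each of the three B-generators on the pair (i,j) — namely CZ_{i,n+i}·CZ_{j,n+j}, S_i·S_j, and S_{n+i}·S_{n+j} — is GHZ-preserving: for all GHZ-basis states u, v there exist GHZ-basis states u′, v′ and a unit complex scalar λ such that applying the generator to u⊗v yields λ(u′⊗v′). -/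
/-!
Up to a phase, the GHZ-basis states are exactly the vectors `(|a⟩ + s |a + 1⟩)/√2` with
`a ∈ 𝔽₂ⁿ` and `s = ±1` (`a + 1` is the bitwise complement): a Pauli string sends
`|0…0⟩ ↦ c |d⟩` and `|1…1⟩ ↦ c s |d + 1⟩`, where `d` marks its `X`/`Y` factors and `s = ±1` is the
parity of its `Y`/`Z` factors, and conversely every `(d, s)` is reached.

All three B-generators are diagonal, so they send a tensor product of two such states to a
combination of the four basis vectors `|a + e, b + e'⟩`, `e, e' ∈ 𝔽₂`. The result is again a
product state of this form as soon as the diagonal entries on that square are `μ, μβ, μα, μαβ`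
with `|μ| = 1` and `α, β = ±1`. The entries are products of a two-qubit phase on node `i` and on
node `j`; each flip on one node multiplies that phase by `±1` (for `CZ`) or `±i` (for `S`), and
the cross term `(-1)^{ee'}` of `CZ` occurs once per node. Having two nodes squares the `±i` into a
sign and cancels the cross term.
-/

noncomputable section

section

open Matrix

variable {n : ℕ}

def ghzState (a : Fin n → Fin 2) (s : ℂ) : QState (Fin n) :=
  (Real.sqrt 2 : ℂ)⁻¹ • (Pi.single a 1 + s • Pi.single (a + 1) 1)

lemma ghz_eq_ghzState : ghz n = ghzState 0 1 := by
  ext f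
  simp only [ghz, ghzState, zero_add, one_smul, Pi.smul_apply, Pi.add_apply, Pi.single_apply,
    smul_eq_mul]
  rfl

section Tensor

variable (u u' v v' : QState (Fin n)) (c : ℂ)

lemma tensor2_add_left : tensor2 (u + u') v = tensor2 u v + tensor2 u' v := by
  ext f; simp [tensor2, add_mul]

lemma tensor2_add_right : tensor2 u (v + v') = tensor2 u v + tensor2 u v' := by
  ext f; simp [tensor2, mul_add]

lemma tensor2_smul_left : tensor2 (c • u) v = c • tensor2 u v := by
  ext f; simp [tensor2, mul_assoc]

lemma tensor2_smul_right : tensor2 u (c • v) = c • tensor2 u v := by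
  ext f; simp [tensor2, mul_left_comm]

lemma tensor2_single_single (x y : Fin n → Fin 2) :
    tensor2 (Pi.single x 1) (Pi.single y 1) = Pi.single (Sum.elim x y) 1 := by
  ext f
  have : f = Sum.elim x y ↔ (fun i => f (.inl i)) = x ∧ (fun i => f (.inr i)) = y := by
    simp [funext_iff, Sum.forall]
  simp only [tensor2, Pi.single_apply, this, ite_and, mul_ite, mul_one, mul_zero]
  split_ifs <;> rfl

end Tensor

def IsSignedFlip (A : Matrix (Fin 2) (Fin 2) ℂ) (d : Fin 2) (c ε : ℂ) : Prop :=
  A.col 0 = Pi.single d c ∧ A.col 1 = Pi.single (d + 1) (c * ε)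

lemma isSignedFlip_pI : IsSignedFlip pI 0 1 1 := by
  constructor <;> ext y <;> fin_cases y <;> simp [pI, one_apply]

lemma isSignedFlip_pX : IsSignedFlip pX 1 1 1 := by
  constructor <;> ext y <;> fin_cases y <;> simp [pX]

lemma isSignedFlip_pZ : IsSignedFlip pZ 0 1 (-1) := by
  constructor <;> ext y <;> fin_cases y <;> simp [pZ]

lemma isSignedFlip_pY : IsSignedFlip pY 1 Complex.I (-1) := by
  constructor <;> ext y <;> fin_cases y <;> simp [pY]

lemma kron_col {P : Fin n → Matrix (Fin 2) (Fin 2) ℂ} {x d : Fin n → Fin 2} {c : Fin n → ℂ}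
    (hP : ∀ i, (P i).col (x i) = Pi.single (d i) (c i)) :
    (kron P).col x = Pi.single d (∏ i, c i) := by
  ext y
  have hPi : ∀ i, P i (y i) (x i) = if y i = d i then c i else 0 := fun i => by
    rw [← Pi.single_apply, ← hP i, col_apply]
  simp [kron, hPi, Fintype.prod_ite_zero, Pi.single_apply, funext_iff]

lemma kron_mulVec_ghz {P : Fin n → Matrix (Fin 2) (Fin 2) ℂ} {d : Fin n → Fin 2} {c ε : Fin n → ℂ}
    (hP : ∀ i, IsSignedFlip (P i) (d i) (c i) (ε i)) :
    kron P *ᵥ ghz n = (∏ i, c i) • ghzState d (∏ i, ε i) := by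
  have col₀ : (kron P).col 0 = Pi.single d (∏ i, c i) := kron_col fun i => (hP i).1
  have col₁ : (kron P).col 1 = Pi.single (d + 1) (∏ i, c i * ε i) := kron_col fun i => (hP i).2
  rw [ghz_eq_ghzState, ghzState, ghzState, mulVec_smul, mulVec_add, mulVec_smul, mulVec_single_one,
    mulVec_single_one, zero_add, smul_comm, col₀, col₁, Finset.prod_mul_distrib]
  congr 1
  ext y
  simp only [Pi.add_apply, Pi.smul_apply, Pi.single_apply, smul_eq_mul]
  split_ifs <;> ring

lemma exists_isSignedFlip_of_mem_pauliSet {A : Matrix (Fin 2) (Fin 2) ℂ} (hA : A ∈ pauliSet) :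
    ∃ d c ε, ‖c‖ = 1 ∧ ε ^ 2 = 1 ∧ IsSignedFlip A d c ε := by
  rcases hA with rfl | rfl | rfl | rfl
  · exact ⟨0, 1, 1, by simp, by simp, isSignedFlip_pI⟩
  · exact ⟨1, 1, 1, by simp, by simp, isSignedFlip_pX⟩
  · exact ⟨1, Complex.I, -1, by simp, by simp, isSignedFlip_pY⟩
  · exact ⟨0, 1, -1, by simp, by simp, isSignedFlip_pZ⟩

lemma exists_mem_pauliSet_isSignedFlip (d : Fin 2) {ε : ℂ} (hε : ε ^ 2 = 1) :
    ∃ A ∈ pauliSet, ∃ c, ‖c‖ = 1 ∧ IsSignedFlip A d c ε := by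
  have mem : pI ∈ pauliSet ∧ pX ∈ pauliSet ∧ pY ∈ pauliSet ∧ pZ ∈ pauliSet := by
    simp [pauliSet]
  fin_cases d <;> obtain rfl | rfl := sq_eq_one_iff.mp hε
  · exact ⟨pI, mem.1, 1, by simp, isSignedFlip_pI⟩
  · exact ⟨pZ, mem.2.2.2, 1, by simp, isSignedFlip_pZ⟩
  · exact ⟨pX, mem.2.1, 1, by simp, isSignedFlip_pX⟩
  · exact ⟨pY, mem.2.2.1, Complex.I, by simp, isSignedFlip_pY⟩

lemma IsGHZBasis.exists_eq_smul_ghzState {u : QState (Fin n)} (hu : IsGHZBasis u) :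
    ∃ a s, ∃ c : ℂ, s ^ 2 = 1 ∧ ‖c‖ = 1 ∧ u = c • ghzState a s := by
  obtain ⟨_, ⟨P, hP, rfl⟩, rfl⟩ := hu
  choose d c ε hc hε hflip using fun i => exists_isSignedFlip_of_mem_pauliSet (hP i)
  refine ⟨d, ∏ i, ε i, ∏ i, c i, ?_, ?_, kron_mulVec_ghz hflip⟩
  · rw [← Finset.prod_pow]; exact Finset.prod_eq_one fun i _ => hε i
  · rw [norm_prod]; exact Finset.prod_eq_one fun i _ => hc i

lemma exists_isGHZBasis_smul_ghzState (hn : 0 < n) (a : Fin n → Fin 2) {s : ℂ} (hs : s ^ 2 = 1) :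
    ∃ c : ℂ, ‖c‖ = 1 ∧ IsGHZBasis (c • ghzState a s) := by
  let ε : Fin n → ℂ := fun i => if i = ⟨0, hn⟩ then s else 1
  have hε : ∀ i, ε i ^ 2 = 1 := fun i => by dsimp only [ε]; split_ifs <;> simp [hs]
  choose P hP c hc hflip using fun i => exists_mem_pauliSet_isSignedFlip (a i) (hε i)
  have hprod : ∏ i, ε i = s := by simp [ε]
  refine ⟨∏ i, c i, by rw [norm_prod]; exact Finset.prod_eq_one fun i _ => hc i,
    kron P, ⟨P, hP, rfl⟩, ?_⟩
  rw [kron_mulVec_ghz hflip, hprod]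

lemma ghzPreserving2_of_ghzState (hn : 0 < n) {U : QOp (Fin n ⊕ Fin n)}
    (hU : ∀ a b s t, s ^ 2 = 1 → t ^ 2 = 1 → ∃ a' b' s' t', ∃ μ : ℂ,
      s' ^ 2 = 1 ∧ t' ^ 2 = 1 ∧ ‖μ‖ = 1 ∧
      U *ᵥ tensor2 (ghzState a s) (ghzState b t) = μ • tensor2 (ghzState a' s') (ghzState b' t')) :
    GHZPreserving2 U := by
  intro u v hu hv
  obtain ⟨a, s, c, hs, hc, rfl⟩ := hu.exists_eq_smul_ghzState
  obtain ⟨b, t, c', ht, hc', rfl⟩ := hv.exists_eq_smul_ghzState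
  obtain ⟨a', b', s', t', μ, hs', ht', hμ, hU⟩ := hU a b s t hs ht
  obtain ⟨d, hd, hu'⟩ := exists_isGHZBasis_smul_ghzState hn a' hs'
  obtain ⟨d', hd', hv'⟩ := exists_isGHZBasis_smul_ghzState hn b' ht'
  have hd₀ : d ≠ 0 := norm_ne_zero_iff.mp (hd ▸ one_ne_zero)
  have hd₀' : d' ≠ 0 := norm_ne_zero_iff.mp (hd' ▸ one_ne_zero)
  refine ⟨_, _, hu', hv', c * c' * μ / (d * d'), by simp [hc, hc', hμ, hd, hd'], ?_⟩
  simp only [tensor2_smul_left, tensor2_smul_right, smul_smul, mulVec_smul, hU]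
  congr 1
  field_simp

lemma tensor2_ghzState (a b : Fin n → Fin 2) (s t : ℂ) :
    tensor2 (ghzState a s) (ghzState b t) = ((Real.sqrt 2 : ℂ)⁻¹ * (Real.sqrt 2 : ℂ)⁻¹) •
      (Pi.single (Sum.elim a b) 1 + t • Pi.single (Sum.elim a (b + 1)) 1 +
        s • Pi.single (Sum.elim (a + 1) b) 1 +
        (s * t) • Pi.single (Sum.elim (a + 1) (b + 1)) 1) := by
  simp only [ghzState, tensor2_smul_left, tensor2_smul_right, tensor2_add_left, tensor2_add_right,
    tensor2_single_single]
  module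

lemma diagonal_mulVec_tensor2_ghzState (δ : (Fin n ⊕ Fin n → Fin 2) → ℂ) {a b : Fin n → Fin 2}
    {s t μ α β : ℂ} (h₀₀ : δ (Sum.elim a b) = μ) (h₀₁ : δ (Sum.elim a (b + 1)) = μ * β)
    (h₁₀ : δ (Sum.elim (a + 1) b) = μ * α) (h₁₁ : δ (Sum.elim (a + 1) (b + 1)) = μ * α * β) :
    diagonal δ *ᵥ tensor2 (ghzState a s) (ghzState b t) =
      μ • tensor2 (ghzState a (α * s)) (ghzState b (β * t)) := by
  have hdiag : ∀ z, diagonal δ *ᵥ Pi.single z 1 = δ z • Pi.single z (1 : ℂ) := fun z => by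
    rw [diagonal_mulVec_single, ← smul_eq_mul, Pi.single_smul']
  simp only [tensor2_ghzState, mulVec_smul, mulVec_add, hdiag, h₀₀, h₀₁, h₁₀, h₁₁]
  module

lemma ghzPreserving2_diagonal (hn : 0 < n) (δ : (Fin n ⊕ Fin n → Fin 2) → ℂ)
    (norm_eq_one : ∀ f, ‖δ f‖ = 1)
    (sq_flip_left : ∀ a b, δ (Sum.elim (a + 1) b) ^ 2 = δ (Sum.elim a b) ^ 2)
    (sq_flip_right : ∀ a b, δ (Sum.elim a (b + 1)) ^ 2 = δ (Sum.elim a b) ^ 2)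
    (mul_flip : ∀ a b, δ (Sum.elim a b) * δ (Sum.elim (a + 1) (b + 1)) =
      δ (Sum.elim (a + 1) b) * δ (Sum.elim a (b + 1))) :
    GHZPreserving2 (diagonal δ) := by
  refine ghzPreserving2_of_ghzState hn fun a b s t hs ht => ?_
  have hμ : δ (Sum.elim a b) ≠ 0 := norm_ne_zero_iff.mp (norm_eq_one _ ▸ one_ne_zero)
  have hμ2 : δ (Sum.elim a b) ^ 2 ≠ 0 := pow_ne_zero 2 hμ
  refine ⟨a, b, δ (Sum.elim (a + 1) b) / δ (Sum.elim a b) * s,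
    δ (Sum.elim a (b + 1)) / δ (Sum.elim a b) * t, δ (Sum.elim a b), ?_, ?_, norm_eq_one _,
    diagonal_mulVec_tensor2_ghzState δ rfl ?_ ?_ ?_⟩
  · rw [mul_pow, hs, mul_one, div_pow, sq_flip_left, div_self hμ2]
  · rw [mul_pow, ht, mul_one, div_pow, sq_flip_right, div_self hμ2]
  · field_simp
  · field_simp
  · field_simp
    linear_combination mul_flip a b

def pairPhase (φ : Fin 2 → Fin 2 → ℂ) (i j : Fin n) : (Fin n ⊕ Fin n → Fin 2) → ℂ :=
  fun f => φ (f (.inl i)) (f (.inr i)) * φ (f (.inl j)) (f (.inr j))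

structure IsGHZPairPhase (φ : Fin 2 → Fin 2 → ℂ) : Prop where
  norm_eq_one : ∀ x y, ‖φ x y‖ = 1
  sq_flip_left : ∀ x y x' y', (φ (x + 1) y * φ (x' + 1) y') ^ 2 = (φ x y * φ x' y') ^ 2
  sq_flip_right : ∀ x y x' y', (φ x (y + 1) * φ x' (y' + 1)) ^ 2 = (φ x y * φ x' y') ^ 2
  mul_flip : ∀ x y x' y', φ x y * φ x' y' * (φ (x + 1) (y + 1) * φ (x' + 1) (y' + 1)) =
    φ (x + 1) y * φ (x' + 1) y' * (φ x (y + 1) * φ x' (y' + 1))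

lemma IsGHZPairPhase.ghzPreserving2 {φ : Fin 2 → Fin 2 → ℂ} (hφ : IsGHZPairPhase φ) (i j : Fin n) :
    GHZPreserving2 (diagonal (pairPhase φ i j)) :=
  ghzPreserving2_diagonal i.pos _ (fun _ => by simp [pairPhase, hφ.norm_eq_one])
    (fun a b => hφ.sq_flip_left (a i) (b i) (a j) (b j))
    (fun a b => hφ.sq_flip_right (a i) (b i) (a j) (b j))
    (fun a b => hφ.mul_flip (a i) (b i) (a j) (b j))

def czPhase (x y : Fin 2) : ℂ := if x = 1 ∧ y = 1 then -1 else 1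

def sPhase (x : Fin 2) : ℂ := if x = 1 then Complex.I else 1

lemma bCZ_eq_diagonal (i j : Fin n) : bCZ i j = diagonal (pairPhase czPhase i j) :=
  diagonal_mul_diagonal _ _

lemma bS₁_eq_diagonal (i j : Fin n) : bS₁ i j = diagonal (pairPhase (fun x _ => sPhase x) i j) :=
  diagonal_mul_diagonal _ _

lemma bS₂_eq_diagonal (i j : Fin n) : bS₂ i j = diagonal (pairPhase (fun _ y => sPhase y) i j) :=
  diagonal_mul_diagonal _ _

lemma isGHZPairPhase_czPhase : IsGHZPairPhase czPhase where
  norm_eq_one x y := by unfold czPhase; split_ifs <;> simp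
  sq_flip_left x y x' y' := by
    fin_cases x <;> fin_cases y <;> fin_cases x' <;> fin_cases y' <;> simp [czPhase]
  sq_flip_right x y x' y' := by
    fin_cases x <;> fin_cases y <;> fin_cases x' <;> fin_cases y' <;> simp [czPhase]
  mul_flip x y x' y' := by
    fin_cases x <;> fin_cases y <;> fin_cases x' <;> fin_cases y' <;> simp [czPhase]

lemma isGHZPairPhase_sPhase_left : IsGHZPairPhase fun x _ => sPhase x where
  norm_eq_one x _ := by unfold sPhase; split_ifs <;> simp
  sq_flip_left x _ x' _ := by fin_cases x <;> fin_cases x' <;> simp [sPhase]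
  sq_flip_right _ _ _ _ := rfl
  mul_flip _ _ _ _ := by ring

lemma isGHZPairPhase_sPhase_right : IsGHZPairPhase fun _ y => sPhase y where
  norm_eq_one _ y := by unfold sPhase; split_ifs <;> simp
  sq_flip_left _ _ _ _ := rfl
  sq_flip_right _ y _ y' := by fin_cases y <;> fin_cases y' <;> simp [sPhase]
  mul_flip _ _ _ _ := by ring

end

theorem stmt4_general (n : ℕ) (i j : Fin n) :
    GHZPreserving2 (bCZ i j) ∧ GHZPreserving2 (bS₁ i j) ∧ GHZPreserving2 (bS₂ i j) := by
  rw [bCZ_eq_diagonal, bS₁_eq_diagonal, bS₂_eq_diagonal]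
  exact ⟨isGHZPairPhase_czPhase.ghzPreserving2 i j, isGHZPairPhase_sPhase_left.ghzPreserving2 i j,
    isGHZPairPhase_sPhase_right.ghzPreserving2 i j⟩

/-- STATEMENT 4: each of the three B-generators on a pair of distinct nodes `i ≠ j`
is GHZ-preserving on two copies of the `n`-qubit GHZ state. -/
theorem stmt4 (n : ℕ) (hn : 2 ≤ n) (i j : Fin n) (hij : i ≠ j) :
    GHZPreserving2 (bCZ i j) ∧ GHZPreserving2 (bS₁ i j) ∧ GHZPreserving2 (bS₂ i j) :=
  stmt4_general n i j

end
end
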